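/- Achievability–clearing equivalence (essence of Theorem 2): Let Λ₁ ⊆ ℝ≥0^N be downward closed and nonempty, T a positive integer, L > 0, and μ ∈ ℝ≥0^N. Then μ ∈ Λ_T = { (1/T)∑_{t=1}^T μ_t : μ_t ∈ Λ₁ } if and only if there exist vectors r_1,…,r_T ∈ Λ₁ such that the queue Q₀ = TμL is cleared by the services r_t L under the dynamics Q_t = (Q_{t-1} − r_t L)⁺, i.e., Q_T = 0. -/

import Mathlib

/-!
Unrolling the recursion, `Q_t = (Q₀ - ∑_{s<t} c_s)⁺` as long as the services `c_s` are
nonnegative, so the queue `TμL` is cleared by the services `r_t L` exactly when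
`Tμ ≤ ∑_t r_t`. Conversely, if `Tμ ≤ ∑_t r_t` with `r_t ∈ Λ₁`, scaling each coordinate of every
`r_t` by the same factor `(Tμ)ⁿ / ∑_t r_tⁿ ≤ 1` gives rates `μ_t ≤ r_t` with `∑_t μ_t = Tμ`, and
downward closedness keeps `μ_t ∈ Λ₁`.
-/

open Finset

section Queue

variable {ι : Type*} {Q c : ℕ → ι → ℝ}

theorem queue_eq_max_sub_sum (hQ : ∀ t, Q (t + 1) = fun i => max (Q t i - c t i) 0)
    (hQ₀ : 0 ≤ Q 0) (i : ι) :
    ∀ T, (∀ t < T, 0 ≤ c t) → Q T i = max (Q 0 i - ∑ t ∈ range T, c t i) 0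
  | 0, _ => by rw [range_zero, sum_empty, sub_zero]; exact (max_eq_left (hQ₀ i)).symm
  | T + 1, hc => by
    have hcT : 0 ≤ c T i := hc T T.lt_succ_self i
    rw [hQ]
    dsimp only
    rw [queue_eq_max_sub_sum hQ hQ₀ i T fun t ht => hc t (ht.trans T.lt_succ_self),
      sum_range_succ]
    rcases le_total (Q 0 i - ∑ t ∈ range T, c t i) 0 with h | h
    · rw [max_eq_right h, max_eq_right (by linarith), max_eq_right (by linarith)]
    · rw [max_eq_left h, sub_sub]

theorem queue_eq_zero_iff (hQ : ∀ t, Q (t + 1) = fun i => max (Q t i - c t i) 0)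
    (hQ₀ : 0 ≤ Q 0) {T : ℕ} (hc : ∀ t < T, 0 ≤ c t) :
    Q T = 0 ↔ Q 0 ≤ ∑ t ∈ range T, c t := by
  simp only [funext_iff, Pi.le_def, Pi.zero_apply, queue_eq_max_sub_sum hQ hQ₀ _ T hc,
    max_eq_right_iff, sub_nonpos, Finset.sum_apply]

theorem exists_queue_eq_zero_iff {q : ι → ℝ} (hq : 0 ≤ q) {T : ℕ} (hc : ∀ t < T, 0 ≤ c t) :
    (∃ Q : ℕ → ι → ℝ, Q 0 = q ∧ (∀ t, Q (t + 1) = fun i => max (Q t i - c t i) 0) ∧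
      Q T = 0) ↔ q ≤ ∑ t ∈ range T, c t := by
  constructor
  · rintro ⟨Q, rfl, hQ, hQT⟩
    exact (queue_eq_zero_iff hQ hq hc).1 hQT
  · intro hle
    let Q : ℕ → ι → ℝ := fun t => Nat.rec q (fun s Qs i => max (Qs i - c s i) 0) t
    exact ⟨Q, rfl, fun _ => rfl, (queue_eq_zero_iff (fun _ => rfl) hq hc).2 hle⟩

end Queue

section Splitting

variable {κ ι : Type*}

theorem exists_le_sum_eq_of_le (s : Finset κ) {r : κ → ι → ℝ} (hr : ∀ t ∈ s, 0 ≤ r t)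
    {y : ι → ℝ} (hy₀ : 0 ≤ y) (hy : y ≤ ∑ t ∈ s, r t) :
    ∃ ν : κ → ι → ℝ, (∀ t ∈ s, 0 ≤ ν t ∧ ν t ≤ r t) ∧ ∑ t ∈ s, ν t = y := by
  have hS : ∀ i, 0 ≤ ∑ t ∈ s, r t i := fun i => sum_nonneg fun t ht => hr t ht i
  have hyS : ∀ i, y i ≤ ∑ t ∈ s, r t i := fun i => by simpa using hy i
  refine ⟨fun t i => y i / (∑ u ∈ s, r u i) * r t i, fun t ht => ⟨fun i => ?_, fun i => ?_⟩, ?_⟩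
  · exact mul_nonneg (div_nonneg (hy₀ i) (hS i)) (hr t ht i)
  · exact mul_le_of_le_one_left (hr t ht i) (div_le_one_of_le₀ (hyS i) (hS i))
  · ext i
    rw [Finset.sum_apply, ← mul_sum, div_mul_cancel_of_imp]
    exact fun h => le_antisymm (h ▸ hyS i) (hy₀ i)

theorem exists_mem_sum_eq_iff_exists_mem_le_sum {Λ : Set (ι → ℝ)} (hsub : ∀ x ∈ Λ, 0 ≤ x)
    (hdc : ∀ x ∈ Λ, ∀ y : ι → ℝ, 0 ≤ y → y ≤ x → y ∈ Λ) (s : Finset κ) {y : ι → ℝ}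
    (hy₀ : 0 ≤ y) :
    (∃ ν : κ → ι → ℝ, (∀ t ∈ s, ν t ∈ Λ) ∧ ∑ t ∈ s, ν t = y) ↔
      ∃ r : κ → ι → ℝ, (∀ t ∈ s, r t ∈ Λ) ∧ y ≤ ∑ t ∈ s, r t := by
  constructor
  · rintro ⟨ν, hν, rfl⟩
    exact ⟨ν, hν, le_rfl⟩
  · rintro ⟨r, hr, hy⟩
    obtain ⟨ν, hνr, hν⟩ := exists_le_sum_eq_of_le s (fun t ht => hsub _ (hr t ht)) hy₀ hy
    exact ⟨ν, fun t ht => hdc _ (hr t ht) _ (hνr t ht).1 (hνr t ht).2, hν⟩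

end Splitting

theorem stmt_18_general (N T : ℕ) (hT : 0 < T) (L : ℝ) (hL : 0 < L)
    (Λ₁ : Set (Fin N → ℝ))
    (hsub : ∀ x ∈ Λ₁, 0 ≤ x)
    (hdc : ∀ x ∈ Λ₁, ∀ y : Fin N → ℝ, 0 ≤ y → y ≤ x → y ∈ Λ₁)
    (μ : Fin N → ℝ) (hμ : 0 ≤ μ) :
    (μ ∈ {x : Fin N → ℝ | ∃ ν : Fin T → (Fin N → ℝ),
        (∀ t, ν t ∈ Λ₁) ∧ x = (1 / (T : ℝ)) • ∑ t, ν t}) ↔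
    ∃ r : ℕ → Fin N → ℝ, (∀ t, t < T → r t ∈ Λ₁) ∧
      ∃ Q : ℕ → Fin N → ℝ, Q 0 = ((T : ℝ) * L) • μ ∧
        (∀ t, Q (t + 1) = fun n => max (Q t n - L * r t n) 0) ∧
        Q T = 0 := by
  have hT₀ : (T : ℝ) ≠ 0 := by positivity
  have hTμ : 0 ≤ (T : ℝ) • μ := smul_nonneg T.cast_nonneg hμ
  simp only [Set.mem_ofPred_eq, one_div, eq_inv_smul_iff₀ hT₀, eq_comm (a := (T : ℝ) • μ)]
  -- an `ℕ`-indexed sequence restricts to any family indexed by `Fin T`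
  rw [Fin.val_injective.surjective_comp_right.exists]
  simp only [Function.comp_apply, Fin.sum_univ_eq_sum_range, Fin.forall_iff, ← mem_range]
  rw [exists_mem_sum_eq_iff_exists_mem_le_sum hsub hdc _ hTμ]
  refine exists_congr fun r => and_congr_right fun hr => ?_
  have hc : ∀ t < T, 0 ≤ L • r t := fun t ht => smul_nonneg hL.le (hsub _ (hr t (mem_range.2 ht)))
  rw [mul_comm, mul_smul]
  refine ((exists_queue_eq_zero_iff (smul_nonneg hL.le hTμ) hc).trans ?_).symm
  rw [← smul_sum, smul_le_smul_iff_of_pos_left hL]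

theorem stmt_18 (N T : ℕ) (hN : 0 < N) (hT : 0 < T) (L : ℝ) (hL : 0 < L)
    (Λ₁ : Set (Fin N → ℝ)) (hne : Λ₁.Nonempty)
    (hsub : ∀ x ∈ Λ₁, 0 ≤ x)
    (hdc : ∀ x ∈ Λ₁, ∀ y : Fin N → ℝ, 0 ≤ y → y ≤ x → y ∈ Λ₁)
    (μ : Fin N → ℝ) (hμ : 0 ≤ μ) :
    (μ ∈ {x : Fin N → ℝ | ∃ ν : Fin T → (Fin N → ℝ),
        (∀ t, ν t ∈ Λ₁) ∧ x = (1 / (T : ℝ)) • ∑ t, ν t}) ↔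
    ∃ r : ℕ → Fin N → ℝ, (∀ t, t < T → r t ∈ Λ₁) ∧
      ∃ Q : ℕ → Fin N → ℝ, Q 0 = ((T : ℝ) * L) • μ ∧
        (∀ t, Q (t + 1) = fun n => max (Q t n - L * r t n) 0) ∧
        Q T = 0 :=
  stmt_18_general N T hT L hL Λ₁ hsub hdc μ hμ
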